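/- arXiv:0904.4482 — 5 statements merged into one kernel-verified Lean document; each statement's English description precedes it below -/
import Mathlib

section
/- Every fully residually free group G is a CSA group: every maximal abelian subgroup M of G is malnormal, i.e., for every g ∈ G with g ∉ M one has g⁻¹Mg ∩ M = {1}. -/
/-!
Free groups are commutation transitive: by Nielsen–Schreier the centralizer of `a ≠ 1` is a free
group with nontrivial centre, and a free group on two distinct generators has trivial centre, so
it is abelian, hence infinite cyclic. From this one gets that `a ≠ 1` commuting with `b⁻¹ a b`
forces `a` to commute with `b`. Both properties say that a commutator is trivial, given an
equation and one nontrivial element, so they pass to a fully residually free group `G` via a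
homomorphism to a free group keeping both that element and the commutator nontrivial.
In `G`, if `1 ≠ m ∈ M` and `g⁻¹ m g ∈ M`, the centralizer of `m` is abelian and contains `M`,
so it is `M` by maximality; and `g` commutes with `m`, so `g ∈ M`.
-/

/-- A group `G` is *fully residually free* if for every finite set of nontrivial elements
of `G` there is a homomorphism from `G` to a free group sending all of them to nontrivial
elements. -/
def IsFullyResiduallyFree (G : Type*) [Group G] : Prop :=
  ∀ s : Finset G, (∀ g ∈ s, g ≠ 1) →
    ∃ (α : Type) (φ : G →* FreeGroup α), ∀ g ∈ s, φ g ≠ 1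

namespace IsFreeGroup

variable (K : Type*) [Group K] [IsFreeGroup K]

theorem subsingleton_generators_of_isMulCommutative [IsMulCommutative K] :
    Subsingleton (Generators K) := by
  classical
  by_contra hnt
  obtain ⟨a, b, hab⟩ := not_subsingleton_iff_nontrivial.mp hnt
  let φ : K →* Equiv.Perm (Fin 3) :=
    lift fun t => if t = a then Equiv.swap 0 1 else Equiv.swap 1 2
  have hcomm := congrArg φ (mul_comm' (of a) (of b))
  simp only [map_mul, φ, lift_of, if_neg hab.symm] at hcomm
  exact absurd hcomm (by decide)

theorem isCyclic_of_subsingleton_generators [Subsingleton (Generators K)] : IsCyclic K := by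
  have : IsCyclic (FreeGroup (Generators K)) := by
    cases isEmpty_or_nonempty (Generators K)
    · exact isCyclic_of_subsingleton
    · have := uniqueOfSubsingleton (Classical.arbitrary (Generators K))
      infer_instance
  exact (toFreeGroup K).isCyclic.mpr this

theorem isCyclic_of_isMulCommutative [IsMulCommutative K] : IsCyclic K :=
  have := subsingleton_generators_of_isMulCommutative K
  isCyclic_of_subsingleton_generators K

end IsFreeGroup

namespace FreeGroup

variable {α : Type*}

def exponentSum [DecidableEq α] (x : α) : FreeGroup α →* Multiplicative ℤ :=
  lift fun y => Multiplicative.ofAdd (if y = x then 1 else 0)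

/-- The abelian subgroup generated by `z` and `of x` is cyclic, and its generator is `of x` up to
sign because the exponent sum of `of x` in `x` is `1`. -/
theorem mem_zpowers_of_commute_of {x : α} {z : FreeGroup α} (h : Commute z (of x)) :
    z ∈ Subgroup.zpowers (of x) := by
  classical
  let H := Subgroup.closure {z, of x}
  have : IsMulCommutative H := Subgroup.isMulCommutative_closure <| by
    simp only [Set.mem_insert_iff, Set.mem_singleton_iff]
    rintro _ (rfl | rfl) _ (rfl | rfl) <;> first | rfl | exact h | exact h.symm
  obtain ⟨c, hc⟩ := H.isCyclic_iff_exists_zpowers_eq_top.mp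
    (IsFreeGroup.isCyclic_of_isMulCommutative H)
  obtain ⟨i, hi⟩ := Subgroup.mem_zpowers_iff.mp
    (hc ▸ Subgroup.subset_closure (by simp) : of x ∈ Subgroup.zpowers c)
  obtain ⟨j, rfl⟩ := Subgroup.mem_zpowers_iff.mp
    (hc ▸ Subgroup.subset_closure (by simp) : z ∈ Subgroup.zpowers c)
  have hi1 : i * (exponentSum x c).toAdd = 1 := by
    have := congrArg (fun g => (exponentSum x g).toAdd) hi
    simpa [exponentSum, mul_comm] using this
  have hii : i * i = 1 := by
    rcases Int.eq_one_or_neg_one_of_mul_eq_one hi1 with rfl | rfl <;> rfl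
  refine Subgroup.mem_zpowers_iff.mpr ⟨i * j, ?_⟩
  rw [← hi, ← zpow_mul, ← mul_assoc, hii, one_mul]

theorem eq_one_of_forall_commute {x y : α} (hxy : x ≠ y) {z : FreeGroup α}
    (hz : ∀ w, Commute z w) : z = 1 := by
  classical
  obtain ⟨m, rfl⟩ := Subgroup.mem_zpowers_iff.mp (mem_zpowers_of_commute_of (hz (of x)))
  obtain ⟨n, hn⟩ := Subgroup.mem_zpowers_iff.mp (mem_zpowers_of_commute_of (hz (of y)))
  have hm : m = 0 := by
    simpa [exponentSum, hxy, eq_comm] using congrArg (fun g => (exponentSum x g).toAdd) hn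
  rw [hm, zpow_zero]

end FreeGroup

theorem IsFreeGroup.isMulCommutative_of_forall_commute (K : Type*) [Group K] [IsFreeGroup K]
    {z : K} (hz1 : z ≠ 1) (hz : ∀ w, Commute z w) : IsMulCommutative K := by
  rcases subsingleton_or_nontrivial (Generators K) with _ | ⟨a, b, hab⟩
  · have := isCyclic_of_subsingleton_generators K
    infer_instance
  · refine absurd ((toFreeGroup K).map_eq_one_iff.mp ?_) hz1
    refine FreeGroup.eq_one_of_forall_commute hab fun w => ?_
    simpa using (hz ((toFreeGroup K).symm w)).map (toFreeGroup K)

namespace FreeGroup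

variable {α : Type*}

theorem isMulCommutative_centralizer {a : FreeGroup α} (ha : a ≠ 1) :
    IsMulCommutative (Subgroup.centralizer {a}) :=
  IsFreeGroup.isMulCommutative_of_forall_commute _
    (z := ⟨a, Subgroup.mem_centralizer_singleton_iff.mpr rfl⟩) (by simpa using ha)
    fun w => Subtype.ext (Subgroup.mem_centralizer_singleton_iff.mp w.2).symm

theorem commute_of_commute_of_commute {a x y : FreeGroup α} (ha : a ≠ 1)
    (hx : Commute x a) (hy : Commute y a) : Commute x y := by
  have := isMulCommutative_centralizer ha
  exact congrArg Subtype.val (mul_comm' (⟨x, Subgroup.mem_centralizer_singleton_iff.mpr hx⟩ :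
    Subgroup.centralizer {a}) ⟨y, Subgroup.mem_centralizer_singleton_iff.mpr hy⟩)

theorem commute_of_commute_pow {b c : FreeGroup α} {n : ℕ} (hn : n ≠ 0)
    (h : Commute c (b ^ n)) : Commute c b := by
  rcases eq_or_ne (b ^ n) 1 with hb | hb
  · rw [(pow_eq_one_iff_left hn).mp hb]
    exact Commute.one_right c
  · exact commute_of_commute_of_commute hb h (Commute.self_pow b n)

theorem conj_mem_centralizer_of_commute_conj {a b c : FreeGroup α} (ha : a ≠ 1)
    (h : Commute a (b⁻¹ * a * b)) (hc : Commute c a) :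
    b⁻¹ * c * b ∈ Subgroup.centralizer {a} := by
  have ha' : b⁻¹ * a * b ≠ 1 := by
    rwa [ne_eq, mul_eq_one_iff_eq_inv, mul_eq_left]
  have hca' : Commute (b⁻¹ * c * b) (b⁻¹ * a * b) := by
    simpa using (Commute.conj_iff b⁻¹).mpr hc
  exact Subgroup.mem_centralizer_singleton_iff.mpr (commute_of_commute_of_commute ha' hca' h)

/-- The centralizer of `a` is cyclic, generated by `c` say, and conjugation by `b` acts on it as
`c ↦ c ^ k`; the same holds for `b⁻¹`, so torsion-freeness forces `k = ±1`. Hence `b ^ 2`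
centralizes `c`, and commutation transitivity through `b ^ 2` gives `Commute c b`. -/
theorem commute_of_commute_conj {a b : FreeGroup α} (ha : a ≠ 1)
    (h : Commute a (b⁻¹ * a * b)) : Commute a b := by
  have := isMulCommutative_centralizer ha
  obtain ⟨c, hc⟩ := (Subgroup.isCyclic_iff_exists_zpowers_eq_top _).mp
    (IsFreeGroup.isCyclic_of_isMulCommutative (Subgroup.centralizer {a}))
  have hca : Commute c a :=
    Subgroup.mem_centralizer_singleton_iff.mp (hc ▸ Subgroup.mem_zpowers c)
  obtain ⟨i, hi⟩ := Subgroup.mem_zpowers_iff.mp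
    (hc ▸ Subgroup.mem_centralizer_singleton_iff.mpr rfl : a ∈ Subgroup.zpowers c)
  have hc1 : c ≠ 1 := by
    rintro rfl
    exact ha (by rw [← hi, one_zpow])
  have h' : Commute a (b⁻¹⁻¹ * a * b⁻¹) := by
    simpa [mul_assoc] using ((Commute.conj_iff b).mpr h).symm
  obtain ⟨k, hk⟩ := Subgroup.mem_zpowers_iff.mp
    (hc ▸ conj_mem_centralizer_of_commute_conj ha h hca)
  obtain ⟨l, hl⟩ := Subgroup.mem_zpowers_iff.mp
    (hc ▸ conj_mem_centralizer_of_commute_conj ha h' hca)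
  rw [inv_inv] at hl
  have hlk : l * k = 1 := by
    have hclk : c ^ (l * k) = c := by
      rw [zpow_mul, hl, conj_zpow, hk]
      group
    have := (IsMulTorsionFree.zpow_eq_one_iff_right hc1).mp
      (by rw [zpow_sub, hclk, zpow_one, mul_inv_cancel] : c ^ (l * k - 1) = 1)
    omega
  have hkk : k * k = 1 := by
    rcases Int.eq_one_or_neg_one_of_mul_eq_one' hlk with ⟨rfl, rfl⟩ | ⟨rfl, rfl⟩ <;> rfl
  have hconj : (b ^ 2)⁻¹ * c * b ^ 2 = c :=
    calc (b ^ 2)⁻¹ * c * b ^ 2 = b⁻¹ * c ^ k * b⁻¹⁻¹ := by rw [hk, sq]; group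
      _ = c := by rw [← conj_zpow, inv_inv, ← hk, ← zpow_mul, hkk, zpow_one]
  have hcb2 : Commute c (b ^ 2) :=
    calc c * b ^ 2 = b ^ 2 * ((b ^ 2)⁻¹ * c * b ^ 2) := by rw [mul_assoc, mul_inv_cancel_left]
      _ = b ^ 2 * c := by rw [hconj]
  exact hi ▸ (commute_of_commute_pow two_ne_zero hcb2).zpow_left i

end FreeGroup

namespace IsFullyResiduallyFree

variable {G : Type*} [Group G]

theorem exists_hom_ne_one (hG : IsFullyResiduallyFree G) {a b : G} (ha : a ≠ 1)
    (hb : b ≠ 1) : ∃ (α : Type) (φ : G →* FreeGroup α), φ a ≠ 1 ∧ φ b ≠ 1 := by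
  classical
  obtain ⟨α, φ, hφ⟩ := hG {a, b} (by simp [ha, hb])
  exact ⟨α, φ, hφ a (by simp), hφ b (by simp)⟩

theorem commute_of_commute_of_commute (hG : IsFullyResiduallyFree G) {a x y : G} (ha : a ≠ 1)
    (hx : Commute x a) (hy : Commute y a) : Commute x y := by
  by_contra hxy
  obtain ⟨α, φ, hφa, hφxy⟩ :=
    hG.exists_hom_ne_one ha (mt commutatorElement_eq_one_iff_commute.mp hxy)
  rw [map_commutatorElement, ne_eq, commutatorElement_eq_one_iff_commute] at hφxy
  exact hφxy (FreeGroup.commute_of_commute_of_commute hφa (hx.map φ) (hy.map φ))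

theorem commute_of_commute_conj (hG : IsFullyResiduallyFree G) {a b : G} (ha : a ≠ 1)
    (h : Commute a (b⁻¹ * a * b)) : Commute a b := by
  by_contra hab
  obtain ⟨α, φ, hφa, hφab⟩ :=
    hG.exists_hom_ne_one ha (mt commutatorElement_eq_one_iff_commute.mp hab)
  rw [map_commutatorElement, ne_eq, commutatorElement_eq_one_iff_commute] at hφab
  exact hφab (FreeGroup.commute_of_commute_conj hφa (by simpa using h.map φ))

end IsFullyResiduallyFree

/-- Every fully residually free group is a CSA group: every maximal abelian subgroup `M`
is malnormal, i.e. `g⁻¹ M g ∩ M = {1}` for every `g ∉ M`. -/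
theorem fullyResiduallyFree_CSA {G : Type*} [Group G]
    (h : IsFullyResiduallyFree G) (M : Subgroup G)
    (habelian : ∀ a ∈ M, ∀ b ∈ M, a * b = b * a)
    (hmax : ∀ N : Subgroup G, (∀ a ∈ N, ∀ b ∈ N, a * b = b * a) → M ≤ N → N = M)
    (g : G) (hg : g ∉ M) :
    ∀ m ∈ M, g⁻¹ * m * g ∈ M → m = 1 := by
  intro m hm hgm
  by_contra hm1
  have hmg : Commute m g := h.commute_of_commute_conj hm1 (habelian m hm _ hgm)
  have hcentralizer : Subgroup.centralizer {m} = M :=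
    hmax _
      (fun a ha b hb => h.commute_of_commute_of_commute hm1
        (Subgroup.mem_centralizer_singleton_iff.mp ha)
        (Subgroup.mem_centralizer_singleton_iff.mp hb))
      (fun x hx => Subgroup.mem_centralizer_singleton_iff.mpr (habelian x hx m hm))
  exact hg (hcentralizer ▸ Subgroup.mem_centralizer_singleton_iff.mpr hmg.symm)
end

section
/- Every 2-generated subgroup of a fully residually free group is either a free group or an abelian group. -/
open Function
open scoped commutatorElement

theorem Equiv.Perm.exists_extend_of_injective {α : Type*} [Finite α] {p : α → Prop}
    {f : {x // p x} → α} (hf : Injective f) : ∃ σ : Perm α, ∀ x (hx : p x), σ x = f ⟨x, hx⟩ := by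
  classical
  exact ⟨(Equiv.ofInjective f hf).extendSubtype, fun x hx => by
    rw [Equiv.extendSubtype_apply_of_mem _ x hx]; rfl⟩

theorem Subgroup.mul_comm_of_mem_closure {G : Type*} [Group G] {k : Set G}
    (hk : ∀ x ∈ k, ∀ y ∈ k, x * y = y * x) {x y : G} (hx : x ∈ closure k) (hy : y ∈ closure k) :
    x * y = y * x :=
  Set.centralizer_centralizer_comm_of_comm hk x (closure_le_centralizer_centralizer k hx) y
    (closure_le_centralizer_centralizer k hy)

instance MonoidHom.finite_of_fg {G H : Type*} [Group G] [Group.FG G] [Group H] [Finite H] :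
    Finite (G →* H) := by
  obtain ⟨α, _, p, hp⟩ := Group.fg_iff_exists_freeGroup_hom_surjective_finite.1 ‹Group.FG G›
  exact Finite.of_injective (fun f : G →* H => FreeGroup.lift.symm (f.comp p))
    fun f g hfg => (MonoidHom.cancel_right hp).1 (FreeGroup.lift.symm.injective hfg)

theorem Group.ResiduallyFinite.injective_of_surjective {G : Type*} [Group G] [Group.FG G]
    [Group.ResiduallyFinite G] {σ : G →* G} (hσ : Surjective σ) : Injective σ := by
  refine (injective_iff_map_eq_one σ).2 fun w hw => by_contra fun hne => ?_
  obtain ⟨H, hwH⟩ := Group.exists_finiteIndexNormalSubgroup_notMem w hne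
  let χ := QuotientGroup.mk' H.toSubgroup
  have hprecomp : Injective fun ψ : G →* G ⧸ H.toSubgroup => ψ.comp σ :=
    fun _ _ h => (MonoidHom.cancel_right hσ).1 h
  obtain ⟨χ', hχ'⟩ := Finite.injective_iff_surjective.1 hprecomp χ
  apply hwH
  rw [← FiniteIndexNormalSubgroup.mem_toSubgroup_iff, ← QuotientGroup.eq_one_iff]
  change χ w = 1
  rw [← hχ']
  exact (congrArg χ' hw).trans (map_one χ')

namespace FreeGroup

variable {α β : Type*}

theorem exists_hom_perm_extending_mul_left (S : Finset (FreeGroup α)) :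
    ∃ χ : FreeGroup α →* Equiv.Perm S,
      ∀ x (s : S) (hs : of x * (s : FreeGroup α) ∈ S), χ (of x) s = ⟨of x * s, hs⟩ := by
  choose σ hσ using fun x : α =>
    Equiv.Perm.exists_extend_of_injective (p := fun s : S => of x * s ∈ S)
      (f := fun s => ⟨of x * s.1, s.2⟩)
      fun s t hst => Subtype.ext (Subtype.ext (mul_left_cancel (congrArg Subtype.val hst)))
  exact ⟨lift σ, fun x s hs => by rw [lift_apply_of]; exact hσ x s hs⟩

theorem apply_one_eq_mk_of_suffixes_mem {S : Finset (FreeGroup α)}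
    {χ : FreeGroup α →* Equiv.Perm S}
    (hχ : ∀ x (s : S) (hs : of x * (s : FreeGroup α) ∈ S), χ (of x) s = ⟨of x * s, hs⟩)
    {L : List (α × Bool)} (hL : ∀ l, l <:+ L → mk l ∈ S) :
    χ (mk L) ⟨1, hL [] L.nil_suffix⟩ = ⟨mk L, hL L L.suffix_refl⟩ := by
  induction L with
  | nil => simp [← one_eq_mk]
  | cons e l ih =>
    have ih := ih fun l' hl' => hL l' (hl'.trans (l.suffix_cons e))
    obtain ⟨x, b⟩ := e
    show χ (mk [(x, b)] * mk l) _ = _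
    rw [_root_.map_mul, Equiv.Perm.mul_apply, ih]
    cases b with
    | true => exact hχ x _ _
    | false =>
      have hcancel : of x * mk ((x, false) :: l) = mk l := mul_inv_cancel_left (of x) (mk l)
      have hmem : of x * mk ((x, false) :: l) ∈ S := hcancel ▸ hL l (l.suffix_cons _)
      rw [show mk [(x, false)] = (of x)⁻¹ from rfl, _root_.map_inv, Equiv.Perm.inv_eq_iff_eq,
        hχ x _ hmem]
      exact Subtype.ext hcancel.symm

instance residuallyFinite : Group.ResiduallyFinite (FreeGroup α) := by
  classical
  refine Group.residuallyFinite_of_forall_exists_finite_monoidHom fun w hw => ?_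
  let S : Finset (FreeGroup α) := (w.toWord.tails.map mk).toFinset
  have hS : ∀ l, l <:+ w.toWord → mk l ∈ S := fun l hl =>
    List.mem_toFinset.2 (List.mem_map_of_mem ((List.mem_tails _ _).2 hl))
  obtain ⟨χ, hχ⟩ := exists_hom_perm_extending_mul_left S
  refine ⟨Equiv.Perm S, inferInstance, inferInstance, χ, fun hχw => hw ?_⟩
  have hmove := apply_one_eq_mk_of_suffixes_mem hχ hS
  simp only [mk_toWord, hχw, Equiv.Perm.one_apply, Subtype.mk.injEq] at hmove
  exact hmove.symm

theorem finite_and_card_le_of_surjective [Finite α] {π : FreeGroup α →* FreeGroup β}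
    (hπ : Surjective π) : Finite β ∧ Nat.card β ≤ Nat.card α := by
  classical
  let M := Multiplicative (ZMod 2)
  have hinj : Injective fun f : β → M => lift.symm ((lift f).comp π) := fun f g hfg =>
    lift.injective ((MonoidHom.cancel_right hπ).1 (lift.symm.injective hfg))
  have : Finite (β → M) := Finite.of_injective _ hinj
  have : Finite β := Finite.of_injective (fun b => Pi.mulSingle b (Multiplicative.ofAdd 1 : M))
    fun b c hbc => by_contra fun hne => by simpa [Pi.mulSingle_eq_of_ne hne] using congrFun hbc b
  refine ⟨this, ?_⟩
  have hcard := Nat.card_le_card_of_injective _ hinj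
  simp only [Nat.card_fun, M, Nat.card_eq_fintype_card] at hcard
  exact (Nat.pow_le_pow_iff_right (by norm_num)).1 hcard

theorem injective_of_surjective_of_card_le [Finite α] {π : FreeGroup α →* FreeGroup β}
    (hπ : Surjective π) (hcard : Nat.card α ≤ Nat.card β) : Injective π := by
  obtain ⟨_, hle⟩ := finite_and_card_le_of_surjective hπ
  obtain ⟨e⟩ := Finite.card_eq.1 (le_antisymm hle hcard)
  exact Injective.of_comp (f := freeGroupCongr e)
    (Group.ResiduallyFinite.injective_of_surjective (σ := (freeGroupCongr e).toMonoidHom.comp π)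
      ((freeGroupCongr e).surjective.comp hπ))

theorem commute_of_subsingleton [Subsingleton α] (x y : FreeGroup α) : Commute x y :=
  Subgroup.mul_comm_of_mem_closure (k := Set.range of)
    (by rintro _ ⟨i, rfl⟩ _ ⟨j, rfl⟩; rw [Subsingleton.elim i j])
    (by simp [closure_range_of]) (by simp [closure_range_of])

theorem lift_injective_of_not_commute {u v : FreeGroup α} (huv : ¬Commute u v) :
    Injective (lift fun i : Bool => cond i u v) := by
  set ψ := lift fun i : Bool => cond i u v
  let ι := IsFreeGroup.toFreeGroup ψ.range
  have hπ : Surjective (ι.toMonoidHom.comp ψ.rangeRestrict) :=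
    ι.surjective.comp ψ.rangeRestrict_surjective
  have : Finite (IsFreeGroup.Generators ψ.range) := (finite_and_card_le_of_surjective hπ).1
  have hrank : Nat.card Bool ≤ Nat.card (IsFreeGroup.Generators ψ.range) := by
    rw [Nat.card_eq_fintype_card, Fintype.card_bool, Nat.succ_le_iff,
      Finite.one_lt_card_iff_nontrivial, ← not_subsingleton_iff_nontrivial]
    intro
    apply huv
    simpa [ψ, ι] using (commute_of_subsingleton (ι (ψ.rangeRestrict (of true)))
      (ι (ψ.rangeRestrict (of false)))).map (ψ.range.subtype.comp ι.symm.toMonoidHom)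
  rw [← ψ.rangeRestrict_injective_iff]
  exact Injective.of_comp (injective_of_surjective_of_card_le hπ hrank)

end FreeGroup

theorem Subgroup.nonempty_mulEquiv_freeGroup_closure_pair {G α : Type*} [Group G]
    (φ : G →* FreeGroup α) {a b : G} (hab : ¬Commute (φ a) (φ b)) :
    Nonempty (closure {a, b} ≃* FreeGroup Bool) := by
  let ε := FreeGroup.lift fun i : Bool => cond i a b
  have hφε : φ.comp ε = FreeGroup.lift fun i : Bool => cond i (φ a) (φ b) :=
    FreeGroup.ext_hom _ _ fun i => by cases i <;> simp [ε]
  have hε : Injective ε := Injective.of_comp (f := φ) <| by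
    rw [← MonoidHom.coe_comp, hφε]
    exact FreeGroup.lift_injective_of_not_commute hab
  have hrange : ε.range = closure {a, b} := by
    rw [FreeGroup.range_lift_eq_closure]
    congr
    ext
    simp [eq_comm, or_comm]
  exact ⟨(MulEquiv.subgroupCongr hrange).symm.trans (MonoidHom.ofInjective hε).symm⟩

/-- Every 2-generated subgroup of a fully residually free group is either free or abelian. -/
theorem two_generated_subgroup_free_or_abelian {G : Type*} [Group G]
    (h : IsFullyResiduallyFree G) (a b : G) :
    (∃ α : Type, Nonempty ((Subgroup.closure {a, b}) ≃* FreeGroup α)) ∨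
      (∀ x ∈ Subgroup.closure ({a, b} : Set G), ∀ y ∈ Subgroup.closure ({a, b} : Set G),
        x * y = y * x) := by
  by_cases hab : Commute a b
  · refine Or.inr fun x hx y hy => Subgroup.mul_comm_of_mem_closure ?_ hx hy
    simp only [Set.mem_insert_iff, Set.mem_singleton_iff]
    rintro x (rfl | rfl) y (rfl | rfl)
    exacts [rfl, hab, hab.symm, rfl]
  · obtain ⟨α, φ, hφ⟩ := h {⁅a, b⁆} (by simpa [commutatorElement_eq_one_iff_commute] using hab)
    have hφab : ¬Commute (φ a) (φ b) := by
      simpa [← commutatorElement_eq_one_iff_commute, ← map_commutatorElement] using hφ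
    exact Or.inl ⟨Bool, Subgroup.nonempty_mulEquiv_freeGroup_closure_pair φ hφab⟩
end

section
/- Every finitely generated fully residually free group G is linear; more precisely, there is an ultrafilter u on ℕ such that G embeds into SL₂ of the ultrapower of the ring ℤ along u, i.e., there is an injective group homomorphism from G into SL₂(ℤ^ℕ/u). -/
open Filter Matrix Pointwise
open scoped MatrixGroups

def nonzeroSubMul (G M : Type*) [Group G] [AddMonoid M] [DistribMulAction G M] :
    SubMulAction G M where
  carrier := {x | x ≠ 0}
  smul_mem' g _ hx := (smul_ne_zero_iff_ne g).2 hx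

@[simp]
lemma mem_nonzeroSubMul {G M : Type*} [Group G] [AddMonoid M] [DistribMulAction G M] {x : M} :
    x ∈ nonzeroSubMul G M ↔ x ≠ 0 :=
  Iff.rfl

namespace SL2Int

def parabolic (p : ℤ) : SL(2, ℤ) :=
  ⟨!![1 + 2 * p, -2 * p ^ 2; 2, 1 - 2 * p], by simp [det_fin_two_of]; ring⟩

def lineForm (p : ℤ) (x : Fin 2 → ℤ) : ℤ := x 0 - p * x 1

lemma lineForm_parabolic_smul (p : ℤ) (x : Fin 2 → ℤ) :
    lineForm p (parabolic p • x) = lineForm p x := by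
  change lineForm p ((parabolic p : Matrix (Fin 2) (Fin 2) ℤ) *ᵥ x) = _
  simp only [lineForm, parabolic, mulVec, dotProduct, Fin.sum_univ_two, of_apply, cons_val',
    cons_val_zero, cons_val_one, cons_val_fin_one]
  ring

lemma parabolic_smul_apply_one (p : ℤ) (x : Fin 2 → ℤ) :
    (parabolic p • x) 1 = x 1 + 2 * lineForm p x := by
  change ((parabolic p : Matrix (Fin 2) (Fin 2) ℤ) *ᵥ x) 1 = _
  simp only [lineForm, parabolic, mulVec, dotProduct, Fin.sum_univ_two, of_apply, cons_val',
    cons_val_zero, cons_val_one, cons_val_fin_one]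
  ring

abbrev NonzeroVector := nonzeroSubMul SL(2, ℤ) (Fin 2 → ℤ)

def posCone (p : ℤ) : Set NonzeroVector := {x | 0 ≤ lineForm p x * (x.1 1 - lineForm p x)}
def negCone (p : ℤ) : Set NonzeroVector := {x | lineForm p x * (x.1 1 + lineForm p x) < 0}

lemma parabolic_smul_compl_negCone (p : ℤ) : parabolic p • (negCone p)ᶜ ⊆ posCone p := by
  rintro _ ⟨x, hx, rfl⟩
  simp only [Set.mem_compl_iff, negCone, posCone, Set.mem_ofPred_eq, not_lt,
    SubMulAction.val_smul] at hx ⊢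
  rw [lineForm_parabolic_smul, parabolic_smul_apply_one]
  linarith

lemma parabolic_inv_smul_compl_posCone (p : ℤ) : (parabolic p)⁻¹ • (posCone p)ᶜ ⊆ negCone p := by
  intro x hx
  rw [Set.mem_inv_smul_set_iff] at hx
  simp only [Set.mem_compl_iff, negCone, posCone, Set.mem_ofPred_eq, not_le,
    SubMulAction.val_smul] at hx ⊢
  rw [lineForm_parabolic_smul, parabolic_smul_apply_one] at hx
  linarith

lemma disjoint_posCone_negCone (p : ℤ) : Disjoint (posCone p) (negCone p) :=
  Set.disjoint_left.2 fun x hX hY => by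
    simp only [posCone, negCone, Set.mem_ofPred_eq] at hX hY
    nlinarith [sq_nonneg (lineForm p x)]

lemma abs_lineForm_le_of_mem {p : ℤ} {x : NonzeroVector} (hx : x ∈ posCone p ∪ negCone p) :
    |lineForm p x| ≤ |x.1 1| := by
  have h : lineForm p x ^ 2 ≤ |lineForm p x| * |x.1 1| := by
    rw [← abs_mul]
    rcases hx with hx | hx <;> simp only [posCone, negCone, Set.mem_ofPred_eq] at hx
    · nlinarith [le_abs_self (lineForm p x * x.1 1)]
    · nlinarith [neg_abs_le (lineForm p x * x.1 1)]
  nlinarith [abs_nonneg (lineForm p x), abs_nonneg (x.1 1), sq_abs (lineForm p x)]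

lemma eq_zero_of_abs_lineForm_le {p q : ℤ} (hpq : 3 ≤ |p - q|) {x : Fin 2 → ℤ}
    (hp : |lineForm p x| ≤ |x 1|) (hq : |lineForm q x| ≤ |x 1|) : x = 0 := by
  have h1 : |p - q| * |x 1| ≤ 2 * |x 1| := by
    calc |p - q| * |x 1| = |lineForm q x - lineForm p x| := by
          rw [← abs_mul, lineForm, lineForm]; ring_nf
      _ ≤ |lineForm q x| + |lineForm p x| := abs_sub _ _
      _ ≤ 2 * |x 1| := by linarith
  have hx1 : x 1 = 0 := abs_eq_zero.1 (by nlinarith [abs_nonneg (x 1)])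
  have hx0 : x 0 = 0 := by simpa [lineForm, hx1] using hp
  ext i
  fin_cases i <;> simp [hx0, hx1]

theorem injective_lift_parabolic {ι : Type} [Nontrivial ι] (p : ι → ℤ)
    (hp : Pairwise fun i j => 3 ≤ |p i - p j|) :
    Function.Injective (FreeGroup.lift (parabolic ∘ p)) := by
  have hcone {i j : ι} (hij : i ≠ j) {x : NonzeroVector} (hi : x ∈ posCone (p i) ∪ negCone (p i))
      (hj : x ∈ posCone (p j) ∪ negCone (p j)) : False :=
    x.2 <| eq_zero_of_abs_lineForm_le (hp hij) (abs_lineForm_le_of_mem hi)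
      (abs_lineForm_le_of_mem hj)
  refine FreeGroup.injective_lift_of_ping_pong (parabolic ∘ p) (posCone ∘ p) (negCone ∘ p)
    (fun i => ⟨⟨![p i, 1], by simp⟩, show 0 ≤ lineForm (p i) ![p i, 1] * _ by simp [lineForm]⟩)
    (fun i j hij => Set.disjoint_left.2 fun _ hi hj => hcone hij (.inl hi) (.inl hj))
    (fun i j hij => Set.disjoint_left.2 fun _ hi hj => hcone hij (.inr hi) (.inr hj))
    (fun i j => ?_) (fun i => parabolic_smul_compl_negCone (p i))
    (fun i => parabolic_inv_smul_compl_posCone (p i))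
  rcases eq_or_ne i j with rfl | hij
  · exact disjoint_posCone_negCone (p i)
  · exact Set.disjoint_left.2 fun _ hi hj => hcone hij (.inl hi) (.inr hj)

end SL2Int

namespace FreeGroup

variable {α β : Type*}

theorem map_eq_self_of_forall_mem_toWord [DecidableEq α] {f : α → α} {w : FreeGroup α}
    (hf : ∀ p ∈ w.toWord, f p.1 = p.1) : map f w = w := by
  calc map f w = mk (w.toWord.map fun p => (f p.1, p.2)) := by rw [← map.mk, mk_toWord]
    _ = w := by rw [List.map_congr_left (g := id) fun p hp => by simp [hf p hp], List.map_id,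
      mk_toWord]

theorem map_ne_one_of_injOn [DecidableEq α] {f : α → β} {s : Set α} (hf : s.InjOn f)
    {w : FreeGroup α} (hs : ∀ p ∈ w.toWord, p.1 ∈ s) (hw : w ≠ 1) : map f w ≠ 1 := by
  have : Nonempty α := by
    by_contra! h
    exact hw (Subsingleton.elim _ _)
  intro h1
  apply hw
  calc w = map (Function.invFunOn f s) (map f w) := by
        rw [map.comp, map_eq_self_of_forall_mem_toWord]
        exact fun p hp => hf.leftInvOn_invFunOn (hs p hp)
    _ = 1 := by rw [h1, _root_.map_one]

theorem exists_map_nat_ne_one (s : Finset (FreeGroup α)) :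
    ∃ f : α → ℕ, ∀ w ∈ s, w ≠ 1 → map f w ≠ 1 := by
  classical
  set L : Set α := ⋃ w ∈ s, Prod.fst '' {p | p ∈ w.toWord}
  have hL : L.Countable :=
    s.countable_toSet.biUnion fun w _ => (w.toWord.finite_toSet.image _).countable
  obtain ⟨f, hf⟩ := Set.countable_iff_exists_injOn.1 hL
  exact ⟨f, fun w hw => map_ne_one_of_injOn hf fun p hp =>
    Set.mem_biUnion hw (Set.mem_image_of_mem _ hp)⟩

end FreeGroup

namespace Matrix.SpecialLinearGroup

variable {n R ι : Type*} [Fintype n] [DecidableEq n] [CommRing R]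

def ofPi : (ι → SpecialLinearGroup n R) →* SpecialLinearGroup n (ι → R) where
  toFun F := ⟨of fun i j k => F k i j, funext fun k =>
    ((Pi.evalRingHom (fun _ => R) k).map_det _).trans (F k).2⟩
  map_one' := by ext i j k; by_cases h : i = j <;> simp [one_apply, h]
  map_mul' F G := by
    ext i j k
    change _ = ((of fun i j k => F k i j) * (of fun i j k => G k i j) : Matrix n n (ι → R)) i j k
    simp [coe_mul, mul_apply, Finset.sum_apply]

def germHom (l : Filter ι) : (ι → SpecialLinearGroup n R) →* SpecialLinearGroup n (l.Germ R) :=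
  (map (Germ.coeRingHom l)).comp ofPi

theorem germHom_apply_coe (l : Filter ι) (F : ι → SpecialLinearGroup n R) (i j : n) :
    (germHom l F : Matrix n n (l.Germ R)) i j = ((fun k => F k i j : ι → R) : l.Germ R) :=
  rfl

theorem germHom_eq_one_iff {l : Filter ι} {F : ι → SpecialLinearGroup n R} :
    germHom l F = 1 ↔ ∀ᶠ k in l, F k = 1 := by
  rw [← (germHom l).map_one, SpecialLinearGroup.ext_iff]
  simp only [germHom_apply_coe, Germ.coe_eq, EventuallyEq, ← eventually_all,
    ← SpecialLinearGroup.ext_iff, Pi.one_apply]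

theorem injective_germHom_comp_pi {G : Type*} [Group G] {l : Filter ι} [l.NeBot]
    (ψ : ι → G →* SpecialLinearGroup n R) (hψ : ∀ g ≠ 1, ∀ᶠ k in l, ψ k g ≠ 1) :
    Function.Injective ((germHom l).comp (MonoidHom.pi ψ)) := by
  refine (injective_iff_map_eq_one _).2 fun g hg => ?_
  by_contra hg1
  obtain ⟨k, hk1, hk⟩ := ((germHom_eq_one_iff.1 hg).and (hψ g hg1)).exists
  exact hk hk1

end Matrix.SpecialLinearGroup

def IsFullyResidually (G H : Type*) [Group G] [Group H] : Prop :=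
  ∀ s : Finset G, (∀ g ∈ s, g ≠ 1) → ∃ φ : G →* H, ∀ g ∈ s, φ g ≠ 1

theorem IsFullyResiduallyFree.isFullyResidually {G H : Type*} [Group G] [Group H]
    (hG : IsFullyResiduallyFree G) (hF : ∀ α : Type, IsFullyResidually (FreeGroup α) H) :
    IsFullyResidually G H := by
  classical
  intro s hs
  obtain ⟨α, φ, hφ⟩ := hG s hs
  obtain ⟨ψ, hψ⟩ := hF α (s.image φ) (by simpa using hφ)
  exact ⟨ψ.comp φ, fun g hg => hψ _ (Finset.mem_image_of_mem _ hg)⟩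

theorem IsFullyResidually.exists_seq {G H : Type*} [Group G] [Group H] [Countable G]
    (h : IsFullyResidually G H) :
    ∃ ψ : ℕ → G →* H, ∀ g ≠ 1, ∀ᶠ n in atTop, ψ n g ≠ 1 := by
  classical
  obtain ⟨e, he⟩ := exists_surjective_nat G
  choose ψ hψ using fun n : ℕ =>
    h (((Finset.range (n + 1)).image e).erase 1) fun g hg => Finset.ne_of_mem_erase hg
  refine ⟨ψ, fun g hg => ?_⟩
  obtain ⟨i, rfl⟩ := he g
  filter_upwards [eventually_ge_atTop i] with n hn
  exact hψ n _ (Finset.mem_erase.2 ⟨hg, Finset.mem_image_of_mem e (Finset.mem_range.2 (by omega))⟩)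

theorem exists_injective_freeGroup_nat_SL2 :
    ∃ φ : FreeGroup ℕ →* SL(2, ℤ), Function.Injective φ := by
  refine ⟨_, SL2Int.injective_lift_parabolic (fun k : ℕ => 3 * (k : ℤ)) fun i j hij => ?_⟩
  have : (i : ℤ) - j ≠ 0 := sub_ne_zero.2 (by exact_mod_cast hij)
  show 3 ≤ |3 * (i : ℤ) - 3 * j|
  rw [← mul_sub, abs_mul, abs_of_pos three_pos]
  exact le_mul_of_one_le_right zero_le_three (Int.one_le_abs this)

theorem FreeGroup.isFullyResidually_SL2 (α : Type) : IsFullyResidually (FreeGroup α) SL(2, ℤ) := by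
  intro s hs
  obtain ⟨f, hf⟩ := FreeGroup.exists_map_nat_ne_one s
  obtain ⟨φ, hφ⟩ := exists_injective_freeGroup_nat_SL2
  exact ⟨φ.comp (FreeGroup.map f), fun w hw => (map_ne_one_iff φ hφ).2 (hf w hw (hs w hw))⟩

theorem Group.FG.countable {G : Type*} [Group G] (hG : Group.FG G) : Countable G := by
  obtain ⟨α, _, φ, hφ⟩ := Group.fg_iff_exists_freeGroup_hom_surjective_finite.1 hG
  exact hφ.countable

/-- Every finitely generated fully residually free group is linear: it embeds into
`SL₂(ℤ^ℕ/u)` for some ultrafilter `u` on `ℕ`, where `ℤ^ℕ/u` is the ultrapower of the ring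
`ℤ` along `u` (realized as the ring of germs of functions `ℕ → ℤ` along `u`). -/
theorem fullyResiduallyFree_linear {G : Type*} [Group G]
    (hfg : Group.FG G) (h : IsFullyResiduallyFree G) :
    ∃ (u : Ultrafilter ℕ)
      (φ : G →* Matrix.SpecialLinearGroup (Fin 2) ((u : Filter ℕ).Germ ℤ)),
      Function.Injective φ := by
  have := hfg.countable
  obtain ⟨ψ, hψ⟩ := (h.isFullyResidually FreeGroup.isFullyResidually_SL2).exists_seq
  exact ⟨.of atTop, _, Matrix.SpecialLinearGroup.injective_germHom_comp_pi ψ fun g hg =>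
    (hψ g hg).filter_mono (Ultrafilter.of_le _)⟩
end

section
/- Let G be a CSA group and let a, b ∈ G be two non-commuting elements. Then for all w, u ∈ G: (w = 1 or u = 1) holds if and only if [w, u] = 1, [w, a⁻¹ua] = 1, and [w, b⁻¹ub] = 1. In particular, in a non-abelian CSA group a disjunction of two equations is equivalent to a conjunction of three equations. -/
/-!
Suppose `w ≠ 1` and `u ≠ 1` satisfy the three equations, i.e. `w` commutes with `u`, `a⁻¹ u a`
and `b⁻¹ u b`. Put `w` in a maximal abelian subgroup `M`. In a CSA group anything commuting with
a nontrivial element of `M` lies in `M`, so `u`, `a⁻¹ u a` and `b⁻¹ u b` all lie in `M`.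
Malnormality of `M` then forces `a, b ∈ M`, so `a` and `b` commute.
-/

/-- A subgroup `M` of `G` is maximal abelian if it is abelian and is not properly contained
in any abelian subgroup of `G`. -/
def IsMaxAbelian {G : Type*} [Group G] (M : Subgroup G) : Prop :=
  (∀ a ∈ M, ∀ b ∈ M, a * b = b * a) ∧
    ∀ N : Subgroup G, (∀ a ∈ N, ∀ b ∈ N, a * b = b * a) → M ≤ N → N = M

/-- A group is CSA if every maximal abelian subgroup `M` is malnormal:
`g⁻¹ M g ∩ M = {1}` for every `g ∉ M`. -/
def IsCSA (G : Type*) [Group G] : Prop :=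
  ∀ M : Subgroup G, IsMaxAbelian M →
    ∀ g ∉ M, ∀ m ∈ M, g⁻¹ * m * g ∈ M → m = 1

section

variable {G : Type*} [Group G]

theorem inv_mul_inv_mul_mul_eq_one_iff {x y : G} : x⁻¹ * y⁻¹ * x * y = 1 ↔ x * y = y * x := by
  rw [mul_assoc, ← mul_inv_rev, inv_mul_eq_one, eq_comm]

theorem exists_isMaxAbelian_ge (H : Subgroup G) (hH : ∀ a ∈ H, ∀ b ∈ H, a * b = b * a) :
    ∃ M : Subgroup G, IsMaxAbelian M ∧ H ≤ M := by
  obtain ⟨M, hHM, hM, hMmax⟩ := zorn_le_nonempty₀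
    {N : Subgroup G | ∀ a ∈ N, ∀ b ∈ N, a * b = b * a}
    (fun c hc hchain N hN => by
      refine ⟨sSup c, ?_, fun _ => le_sSup⟩
      have hdir : DirectedOn (· ≤ ·) c := hchain.directedOn
      intro p hp q hq
      obtain ⟨P, hPc, hpP⟩ := (Subgroup.mem_sSup_of_directedOn ⟨N, hN⟩ hdir).1 hp
      obtain ⟨Q, hQc, hqQ⟩ := (Subgroup.mem_sSup_of_directedOn ⟨N, hN⟩ hdir).1 hq
      obtain ⟨R, hRc, hPR, hQR⟩ := hdir P hPc Q hQc
      exact hc hRc p (hPR hpP) q (hQR hqQ)) H hH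
  exact ⟨M, ⟨hM, fun N hN hMN => le_antisymm (hMmax hN hMN) hMN⟩, hHM⟩

theorem exists_isMaxAbelian_mem (x : G) : ∃ M : Subgroup G, IsMaxAbelian M ∧ x ∈ M := by
  have hx : ∀ a ∈ Subgroup.zpowers x, ∀ b ∈ Subgroup.zpowers x, a * b = b * a := by
    rintro _ ⟨i, rfl⟩ _ ⟨j, rfl⟩
    exact zpow_mul_comm x i j
  obtain ⟨M, hM, hxM⟩ := exists_isMaxAbelian_ge _ hx
  exact ⟨M, hM, hxM (Subgroup.mem_zpowers x)⟩

namespace IsCSA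

theorem mem_of_conj_mem (hG : IsCSA G) {M : Subgroup G} (hM : IsMaxAbelian M) {m : G}
    (hm : m ∈ M) (hm1 : m ≠ 1) {g : G} (hg : g⁻¹ * m * g ∈ M) : g ∈ M := by
  by_contra hgM
  exact hm1 (hG M hM g hgM m hm hg)

theorem mem_of_commute (hG : IsCSA G) {M : Subgroup G} (hM : IsMaxAbelian M) {m : G}
    (hm : m ∈ M) (hm1 : m ≠ 1) {t : G} (hmt : m * t = t * m) : t ∈ M :=
  hG.mem_of_conj_mem hM hm hm1 (by rwa [mul_assoc, hmt, inv_mul_cancel_left])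

end IsCSA

end

/-- In a CSA group, for any two non-commuting elements `a, b`, the disjunction
`w = 1 ∨ u = 1` is equivalent to the conjunction of the three equations
`[w, u] = 1`, `[w, a⁻¹ u a] = 1` and `[w, b⁻¹ u b] = 1` (where `[x, y] = x⁻¹y⁻¹xy`). -/
theorem csa_disjunction_iff_equations {G : Type*} [Group G] (hG : IsCSA G)
    (a b : G) (hab : a * b ≠ b * a) (w u : G) :
    (w = 1 ∨ u = 1) ↔
      (w⁻¹ * u⁻¹ * w * u = 1 ∧
        w⁻¹ * (a⁻¹ * u * a)⁻¹ * w * (a⁻¹ * u * a) = 1 ∧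
        w⁻¹ * (b⁻¹ * u * b)⁻¹ * w * (b⁻¹ * u * b) = 1) := by
  simp only [inv_mul_inv_mul_mul_eq_one_iff]
  refine ⟨by rintro (rfl | rfl) <;> simp, ?_⟩
  rintro ⟨hwu, hwua, hwub⟩
  by_contra! hne
  obtain ⟨M, hM, hwM⟩ := exists_isMaxAbelian_mem w
  have huM := hG.mem_of_commute hM hwM hne.1 hwu
  have haM := hG.mem_of_conj_mem hM huM hne.2 (hG.mem_of_commute hM hwM hne.1 hwua)
  have hbM := hG.mem_of_conj_mem hM huM hne.2 (hG.mem_of_commute hM hwM hne.1 hwub)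
  exact hab (hM.1 a haM b hbM)
end

section
/- Every finitely generated residually free group G embeds into a direct product of finitely many fully residually free groups: there exist finitely many fully residually free groups G₁, …, Gₙ and an injective group homomorphism from G into G₁ × ⋯ × Gₙ. -/
/-- A group `G` is *residually free* if for every nontrivial element of `G` there is a
homomorphism from `G` to a free group sending it to a nontrivial element. -/
def IsResiduallyFree (G : Type*) [Group G] : Prop :=
  ∀ g : G, g ≠ 1 → ∃ (α : Type) (φ : G →* FreeGroup α), φ g ≠ 1

/-- A bundled fully residually free group. -/
structure FRFGroup where
  carrier : Type
  [group : Group carrier]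
  frf : IsFullyResiduallyFree carrier

attribute [instance] FRFGroup.group

/-!
Represent `G` through its homomorphisms to the free group `F` of countable rank. Since `F` embeds
in `GL₂(ℚ)` (ping-pong), a homomorphism `G → F` is determined by the matrices of finitely many
generators and their inverses, and the condition `φ w = 1` is polynomial in these entries. So
`Hom(G, F)` carries a Noetherian Zariski topology in which every set `{φ | φ w = 1}` is closed, and
it is a finite union of irreducible components `V`. Irreducibility makes `G` modulo the common
kernel of `V` fully residually free: finitely many closed proper subsets of `V` cannot cover it.
Residual freeness says that these finitely many quotients separate the points of `G`.
-/

open Pointwise TopologicalSpace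

section PingPong

variable {H : Type} {α : Type*} [Group H] [MulAction H α] {a b : H} {X Y Z : Set α}

lemma pow_succ_smul_subset (hb : b • (X ∪ Y ∪ Z) ⊆ Z) (m : ℕ) : b ^ (m + 1) • (X ∪ Y) ⊆ Z := by
  induction m with
  | zero => simpa using (Set.smul_set_mono Set.subset_union_left).trans hb
  | succ m ih =>
    rw [pow_succ', mul_smul]
    exact (Set.smul_set_mono (ih.trans Set.subset_union_right)).trans hb

lemma disjoint_pow_smul_of_lt (hZ : Disjoint (X ∪ Y) Z) (hb : b • (X ∪ Y ∪ Z) ⊆ Z)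
    {S T : Set α} (hS : S ⊆ X ∪ Y) (hT : T ⊆ X ∪ Y) {i j : ℕ} (hij : i < j) :
    Disjoint (b ^ i • S) (b ^ j • T) := by
  obtain ⟨m, rfl⟩ := Nat.exists_eq_add_of_lt hij
  rw [add_assoc, pow_add, mul_smul, Set.disjoint_smul_set]
  exact hZ.mono hS ((Set.smul_set_mono hT).trans (pow_succ_smul_subset hb m))

lemma conj_smul_smul_set (c : H) (S : Set α) : (c * a * c⁻¹) • c • S = c • a • S := by
  rw [smul_smul, inv_mul_cancel_right, mul_smul]

/-- The conjugates `b ^ i * a * b⁻ⁱ` play ping-pong on the translates `b ^ i • X`, `b ^ i • Y`. -/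
theorem injective_lift_conj_pow_of_ping_pong (hX : X.Nonempty) (hXY : Disjoint X Y)
    (hZ : Disjoint (X ∪ Y) Z) (ha : a • Yᶜ ⊆ X) (ha' : a⁻¹ • Xᶜ ⊆ Y)
    (hb : b • (X ∪ Y ∪ Z) ⊆ Z) :
    Function.Injective (FreeGroup.lift fun i : ℕ => b ^ i * a * (b ^ i)⁻¹) := by
  have hpair {S : Set α} (hS : S ⊆ X ∪ Y) :
      Pairwise (Function.onFun Disjoint fun i : ℕ => b ^ i • S) :=
    (pairwise_disjoint_on _).2 fun _ _ => disjoint_pow_smul_of_lt hZ hb hS hS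
  refine FreeGroup.injective_lift_of_ping_pong (α := α) (fun i : ℕ => b ^ i * a * (b ^ i)⁻¹)
    (fun i => b ^ i • X) (fun i => b ^ i • Y) (fun i => hX.smul_set)
    (hpair Set.subset_union_left) (hpair Set.subset_union_right) (fun i j => ?_) (fun i => ?_)
    (fun i => ?_)
  · rcases lt_trichotomy i j with h | rfl | h
    · exact disjoint_pow_smul_of_lt hZ hb Set.subset_union_left Set.subset_union_right h
    · exact Set.disjoint_smul_set.2 hXY
    · exact (disjoint_pow_smul_of_lt hZ hb Set.subset_union_right Set.subset_union_left h).symm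
  · rw [← Set.smul_set_compl, conj_smul_smul_set]
    exact Set.smul_set_mono ha
  · rw [Pi.inv_apply, ← Set.smul_set_compl,
      show (b ^ i * a * (b ^ i)⁻¹)⁻¹ = b ^ i * a⁻¹ * (b ^ i)⁻¹ by group, conj_smul_smul_set]
    exact Set.smul_set_mono ha'

end PingPong

section FreeGroupLinear

abbrev NonzeroVec : Type := {v : Fin 2 → ℚ // v ≠ 0}

instance : MulAction (GL (Fin 2) ℚ) NonzeroVec where
  smul g v := ⟨g • v.1, (smul_ne_zero_iff_ne g).2 v.2⟩
  one_smul v := Subtype.ext (one_smul _ v.1)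
  mul_smul g h v := Subtype.ext (mul_smul g h v.1)

@[simp] lemma NonzeroVec.coe_smul (g : GL (Fin 2) ℚ) (v : NonzeroVec) :
    ((g • v : NonzeroVec) : Fin 2 → ℚ) = g • (v : Fin 2 → ℚ) := rfl

lemma NonzeroVec.abs_add_abs_pos (v : NonzeroVec) : 0 < |v.1 0| + |v.1 1| := by
  by_contra! h
  have h0 : v.1 0 = 0 := abs_nonpos_iff.1 (by linarith [abs_nonneg (v.1 1)])
  have h1 : v.1 1 = 0 := abs_nonpos_iff.1 (by linarith [abs_nonneg (v.1 0)])
  exact v.2 (funext fun i => by fin_cases i <;> assumption)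

def pingA : GL (Fin 2) ℚ :=
  ⟨!![16, 0; 0, 1], !![1 / 16, 0; 0, 1], by simp [Matrix.one_fin_two],
    by simp [Matrix.one_fin_two]⟩

/-- Eigenvalues `32` on `(1, 1)` and `2` on `(1, -1)`: `diagonalCone` around `(1, 1)` attracts. -/
def pingB : GL (Fin 2) ℚ :=
  Matrix.GeneralLinearGroup.mkOfDetNeZero !![17, 15; 15, 17] (by norm_num [Matrix.det_fin_two])

def horizontalCone : Set NonzeroVec := {v | 3 * |v.1 1| < |v.1 0|}

def verticalCone : Set NonzeroVec := {v | 3 * |v.1 0| < |v.1 1|}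

def diagonalCone : Set NonzeroVec := {v | 3 * |v.1 1 - v.1 0| < |v.1 0 + v.1 1|}

lemma pingA_smul_compl_verticalCone : pingA • verticalConeᶜ ⊆ horizontalCone := by
  rintro _ ⟨v, hv, rfl⟩
  have := v.abs_add_abs_pos
  simp [horizontalCone, verticalCone, pingA, Units.smul_def, Matrix.vecHead, Matrix.vecTail]
    at hv ⊢
  linarith

lemma pingA_inv_smul_compl_horizontalCone : pingA⁻¹ • horizontalConeᶜ ⊆ verticalCone := by
  rintro _ ⟨v, hv, rfl⟩
  have := v.abs_add_abs_pos
  simp [horizontalCone, verticalCone, pingA, Units.smul_def, Matrix.vecHead, Matrix.vecTail]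
    at hv ⊢
  linarith

lemma pingB_smul_subset_diagonalCone :
    pingB • (horizontalCone ∪ verticalCone ∪ diagonalCone) ⊆ diagonalCone := by
  rintro _ ⟨v, hv, rfl⟩
  have := v.abs_add_abs_pos
  simp [horizontalCone, verticalCone, diagonalCone, pingB, Units.smul_def, Matrix.vecHead,
    Matrix.vecTail] at hv ⊢
  rw [show ∀ x y : ℚ, 15 * x + 17 * y - (17 * x + 15 * y) = 2 * (y - x) by intros; ring,
    show ∀ x y : ℚ, 17 * x + 15 * y + (15 * x + 17 * y) = 32 * (x + y) by intros; ring,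
    abs_mul, abs_mul]
  rcases abs_cases (v.1 0) with ⟨h0, h0'⟩ | ⟨h0, h0'⟩ <;>
    rcases abs_cases (v.1 1) with ⟨h1, h1'⟩ | ⟨h1, h1'⟩ <;>
    rcases abs_cases (v.1 1 - v.1 0) with ⟨h2, h2'⟩ | ⟨h2, h2'⟩ <;>
    rcases abs_cases (v.1 0 + v.1 1) with ⟨h3, h3'⟩ | ⟨h3, h3'⟩ <;>
    norm_num <;> rcases hv with (hv | hv) | hv <;> linarith

lemma disjoint_horizontalCone_verticalCone : Disjoint horizontalCone verticalCone :=
  Set.disjoint_left.2 fun v hX hY => by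
    simp only [horizontalCone, verticalCone, Set.mem_ofPred_eq] at hX hY
    linarith [abs_nonneg (v.1 0)]

lemma disjoint_union_diagonalCone : Disjoint (horizontalCone ∪ verticalCone) diagonalCone := by
  refine Set.disjoint_left.2 fun v hXY hZ => ?_
  simp only [horizontalCone, verticalCone, diagonalCone, Set.mem_union, Set.mem_ofPred_eq]
    at hXY hZ
  rcases abs_cases (v.1 0) with ⟨h0, h0'⟩ | ⟨h0, h0'⟩ <;>
    rcases abs_cases (v.1 1) with ⟨h1, h1'⟩ | ⟨h1, h1'⟩ <;>
    rcases abs_cases (v.1 1 - v.1 0) with ⟨h2, h2'⟩ | ⟨h2, h2'⟩ <;>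
    rcases abs_cases (v.1 0 + v.1 1) with ⟨h3, h3'⟩ | ⟨h3, h3'⟩ <;>
    rcases hXY with hXY | hXY <;> linarith

def freeGroupNatToGL : FreeGroup ℕ →* GL (Fin 2) ℚ :=
  FreeGroup.lift fun i => pingB ^ i * pingA * (pingB ^ i)⁻¹

theorem injective_freeGroupNatToGL : Function.Injective freeGroupNatToGL :=
  injective_lift_conj_pow_of_ping_pong ⟨⟨![1, 0], by simp⟩, by simp [horizontalCone]⟩
    disjoint_horizontalCone_verticalCone disjoint_union_diagonalCone
    pingA_smul_compl_verticalCone pingA_inv_smul_compl_horizontalCone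
    pingB_smul_subset_diagonalCone

end FreeGroupLinear

section WordMaps

variable {ι n K : Type*} [Fintype n] [DecidableEq n] [CommRing K]

def generatorEntries (ψ : FreeGroup ι →* GL n K) : ι × Bool × n × n → K
  | (i, b, r, c) => ((if b then ψ (.of i) else (ψ (.of i))⁻¹ : GL n K) : Matrix n n K) r c

theorem exists_matrix_eval_generatorEntries_eq (u : FreeGroup ι) :
    ∃ P : Matrix n n (MvPolynomial (ι × Bool × n × n) K), ∀ ψ : FreeGroup ι →* GL n K,
      (MvPolynomial.eval (generatorEntries ψ)).mapMatrix P = ψ u := by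
  induction u using FreeGroup.induction_on with
  | C1 => exact ⟨1, fun ψ => by simp⟩
  | of i => exact ⟨.of fun r c => .X (i, true, r, c), fun ψ => by ext; simp [generatorEntries]⟩
  | inv_of i _ =>
    exact ⟨.of fun r c => .X (i, false, r, c), fun ψ => by ext; simp [generatorEntries]⟩
  | mul u v hu hv =>
    obtain ⟨P, hP⟩ := hu
    obtain ⟨Q, hQ⟩ := hv
    exact ⟨P * Q, fun ψ => by rw [map_mul, hP, hQ, map_mul, Units.val_mul]⟩

end WordMaps

section ZariskiTopology

variable {ι n K G F : Type*} [Fintype n] [DecidableEq n] [Field K] [Group G] [Group F]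

/-- `φ` as a `K`-point of the affine space of generator entries of `ρ ∘ φ ∘ π`. -/
noncomputable def homToPrimeSpectrum (π : FreeGroup ι →* G) (ρ : F →* GL n K) (φ : G →* F) :
    PrimeSpectrum (MvPolynomial (ι × Bool × n × n) K) :=
  ⟨RingHom.ker (MvPolynomial.eval (generatorEntries (ρ.comp (φ.comp π)))), RingHom.ker_isPrime _⟩

theorem exists_noetherianSpace_isClosed_eq_one [Finite ι] (π : FreeGroup ι →* G)
    (hπ : Function.Surjective π) (ρ : F →* GL n K) (hρ : Function.Injective ρ) :
    ∃ _ : TopologicalSpace (G →* F), NoetherianSpace (G →* F) ∧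
      ∀ w : G, IsClosed {φ : G →* F | φ w = 1} := by
  let := TopologicalSpace.induced (homToPrimeSpectrum π ρ) inferInstance
  refine ⟨‹_›, Topology.IsInducing.noetherianSpace ⟨rfl⟩, fun w => ?_⟩
  obtain ⟨u, rfl⟩ := hπ w
  obtain ⟨P, hP⟩ := exists_matrix_eval_generatorEntries_eq (n := n) (K := K) u
  have : {φ : G →* F | φ (π u) = 1} = homToPrimeSpectrum π ρ ⁻¹' PrimeSpectrum.zeroLocus
      (Set.range fun e : n × n => P e.1 e.2 - (1 : Matrix n n _) e.1 e.2) := by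
    ext φ
    have hφ : φ (π u) = 1 ↔
        (MvPolynomial.eval (generatorEntries (ρ.comp (φ.comp π)))).mapMatrix P = 1 := by
      rw [hP, Units.val_eq_one, MonoidHom.comp_apply, MonoidHom.comp_apply, map_eq_one_iff ρ hρ]
    simp [hφ, ← Matrix.ext_iff, homToPrimeSpectrum, PrimeSpectrum.mem_zeroLocus,
      Set.range_subset_iff, sub_eq_zero, Matrix.one_apply, apply_ite]
  rw [this]
  exact (PrimeSpectrum.isClosed_zeroLocus _).preimage continuous_induced_dom

end ZariskiTopology

section CommonKernel

variable {G F : Type*} [Group G] [Group F]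

def commonKernel (V : Set (G →* F)) : Subgroup G :=
  (MonoidHom.pi fun φ : V => (φ : G →* F)).ker

lemma mem_commonKernel {V : Set (G →* F)} {w : G} : w ∈ commonKernel V ↔ ∀ φ ∈ V, φ w = 1 := by
  simp [commonKernel, funext_iff]

instance (V : Set (G →* F)) : (commonKernel V).Normal := MonoidHom.normal_ker _

lemma commonKernel_le_ker {V : Set (G →* F)} {φ : G →* F} (hφ : φ ∈ V) : commonKernel V ≤ φ.ker :=
  fun _ hw => mem_commonKernel.1 hw φ hφ

lemma injective_pi_mk_commonKernel {ι : Type*} (V : ι → Set (G →* F))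
    (hV : ∀ φ, ∃ i, φ ∈ V i) (hsep : ∀ w : G, w ≠ 1 → ∃ φ : G →* F, φ w ≠ 1) :
    Function.Injective (MonoidHom.pi fun i => QuotientGroup.mk' (commonKernel (V i))) := by
  refine (injective_iff_map_eq_one _).2 fun w hw => ?_
  by_contra hne
  obtain ⟨φ, hφ⟩ := hsep w hne
  obtain ⟨i, hi⟩ := hV φ
  have : (QuotientGroup.mk' (commonKernel (V i))) w = 1 := congrFun hw i
  rw [QuotientGroup.mk'_apply, QuotientGroup.eq_one_iff, mem_commonKernel] at this
  exact hφ (this φ hi)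

variable [TopologicalSpace (G →* F)]

theorem IsIrreducible.exists_forall_ne_one {V : Set (G →* F)} (hV : IsIrreducible V)
    (hclosed : ∀ w : G, IsClosed {φ : G →* F | φ w = 1}) (s : Finset G)
    (hs : ∀ w ∈ s, w ∉ commonKernel V) : ∃ φ ∈ V, ∀ w ∈ s, φ w ≠ 1 := by
  classical
  by_contra! h
  obtain ⟨_, hZ, hVZ⟩ := isIrreducible_iff_sUnion_isClosed.1 hV (s.image fun w => {φ | φ w = 1})
    (by simpa using fun w _ => hclosed w) (fun φ hφ => by simpa using h φ hφ)
  obtain ⟨w, hw, rfl⟩ := Finset.mem_image.1 hZ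
  exact hs w hw (mem_commonKernel.2 hVZ)

theorem IsIrreducible.isFullyResiduallyFree_quotient {G α : Type} [Group G]
    [TopologicalSpace (G →* FreeGroup α)] {V : Set (G →* FreeGroup α)} (hV : IsIrreducible V)
    (hclosed : ∀ w : G, IsClosed {φ : G →* FreeGroup α | φ w = 1}) :
    IsFullyResiduallyFree (G ⧸ commonKernel V) := by
  classical
  intro s hs
  obtain ⟨φ, hφV, hφ⟩ := hV.exists_forall_ne_one hclosed (s.image Quotient.out) (by
    simpa [← QuotientGroup.eq_one_iff] using hs)
  refine ⟨α, QuotientGroup.lift _ φ (commonKernel_le_ker hφV), fun q hq => ?_⟩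
  rw [← QuotientGroup.out_eq' q, QuotientGroup.lift_mk]
  exact hφ q.out (Finset.mem_image_of_mem _ hq)

end CommonKernel

section FreeQuotients

theorem IsFreeGroup.exists_injective_freeGroup_nat (H : Type*) [Group H] [IsFreeGroup H]
    [Countable H] : ∃ f : H →* FreeGroup ℕ, Function.Injective f := by
  have : Countable (IsFreeGroup.Generators H) :=
    ((IsFreeGroup.toFreeGroup H).symm.injective.comp FreeGroup.of_injective).countable
  obtain ⟨j, hj⟩ := exists_injective_nat (IsFreeGroup.Generators H)
  exact ⟨(FreeGroup.map j).comp (IsFreeGroup.toFreeGroup H).toMonoidHom,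
    (FreeGroup.map_injective hj).comp (IsFreeGroup.toFreeGroup H).injective⟩

theorem IsResiduallyFree.exists_hom_freeGroup_nat {G : Type*} [Group G] [Countable G]
    (h : IsResiduallyFree G) {w : G} (hw : w ≠ 1) : ∃ φ : G →* FreeGroup ℕ, φ w ≠ 1 := by
  obtain ⟨α, φ, hφ⟩ := h w hw
  -- `φ.range` is a free group by Nielsen–Schreier.
  have : Countable φ.range := φ.rangeRestrict_surjective.countable
  obtain ⟨f, hf⟩ := IsFreeGroup.exists_injective_freeGroup_nat φ.range
  refine ⟨f.comp φ.rangeRestrict, fun h1 => hφ ?_⟩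
  simpa using congrArg Subtype.val ((map_eq_one_iff f hf).1 h1)

theorem IsResiduallyFree.of_injective {G H : Type*} [Group G] [Group H] (f : H →* G)
    (hf : Function.Injective f) (h : IsResiduallyFree G) : IsResiduallyFree H := fun w hw =>
  let ⟨α, φ, hφ⟩ := h (f w) ((map_ne_one_iff f hf).2 hw)
  ⟨α, φ.comp f, hφ⟩

end FreeQuotients

theorem residuallyFree_embeds_in_product_of_surjective {ι G : Type} [Finite ι] [Group G]
    (π : FreeGroup ι →* G) (hπ : Function.Surjective π) (h : IsResiduallyFree G) :
    ∃ (n : ℕ) (H : Fin n → FRFGroup) (φ : G →* (∀ i, (H i).carrier)),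
      Function.Injective φ := by
  obtain ⟨_, _, hclosed⟩ :=
    exists_noetherianSpace_isClosed_eq_one π hπ freeGroupNatToGL injective_freeGroupNatToGL
  have : Countable G := hπ.countable
  have : Finite (irreducibleComponents (G →* FreeGroup ℕ)) :=
    (NoetherianSpace.finite_irreducibleComponents (α := G →* FreeGroup ℕ)).to_subtype
  let e := Finite.equivFin (irreducibleComponents (G →* FreeGroup ℕ))
  refine ⟨_, fun i => ⟨_, (e.symm i).2.1.isFullyResiduallyFree_quotient hclosed⟩, _,
    injective_pi_mk_commonKernel (fun i => (e.symm i).1) (fun φ => ?_)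
      fun w hw => h.exists_hom_freeGroup_nat hw⟩
  exact ⟨e ⟨_, irreducibleComponent_mem_irreducibleComponents φ⟩, by
    rw [Equiv.symm_apply_apply]
    exact mem_irreducibleComponent⟩

/-- Every finitely generated residually free group embeds into a direct product of finitely
many fully residually free groups. -/
theorem residuallyFree_embeds_in_product {G : Type*} [Group G]
    (hfg : Group.FG G) (h : IsResiduallyFree G) :
    ∃ (n : ℕ) (H : Fin n → FRFGroup) (φ : G →* (∀ i, (H i).carrier)),
      Function.Injective φ := by
  obtain ⟨α, _, π, hπ⟩ := Group.fg_iff_exists_freeGroup_hom_surjective_finite.1 hfg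
  -- Pass to a copy of `G` in `Type`, where the quotients by common kernels are `FRFGroup`s.
  let e := QuotientGroup.quotientKerEquivOfSurjective π hπ
  obtain ⟨n, H, φ, hφ⟩ := residuallyFree_embeds_in_product_of_surjective
    (QuotientGroup.mk' π.ker) (QuotientGroup.mk'_surjective _)
    (h.of_injective e.toMonoidHom e.injective)
  exact ⟨n, H, φ.comp e.symm.toMonoidHom, hφ.comp e.symm.injective⟩
end
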